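/- arXiv:1602.00710 — 7 statements merged into one kernel-verified Lean document; each statement's English description precedes it below -/
import Mathlib

section
/- Let A be a nonsingular m-by-m matrix over K[X], let S = U·A·V be the Smith normal form of A with U, V unimodular, let m_j be the j-th diagonal entry of S, and let F = V mod (m_1,...,m_m) (reducing column j of V modulo m_j). Then a row vector p in K[X]^m is in the row space of A (the K[X]-module generated by the rows of A) if and only if p·F ≡ 0 mod (m_1,...,m_m). -/
open Polynomial

lemma span_rows_iff_vecMul {K : Type*} [Field K] {m : ℕ}
    (A : Matrix (Fin m) (Fin m) K[X]) (p : Fin m → K[X]) :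
    p ∈ Submodule.span K[X] (Set.range fun i => A i) ↔
      ∃ q : Fin m → K[X], Matrix.vecMul q A = p := by
  constructor
  · intro hp
    obtain ⟨c, hc⟩ := (Submodule.mem_span_range_iff_exists_fun _).mp hp
    exact ⟨c, by funext j; simpa [Matrix.vecMul, dotProduct] using congrFun hc j⟩
  · rintro ⟨q, rfl⟩
    refine (Submodule.mem_span_range_iff_exists_fun _).mpr ⟨q, ?_⟩
    funext j; simp [Matrix.vecMul, dotProduct]

/-- if diag(m_1,...,m_m) = U·A·V is the Smith normal form of a
nonsingular A (U, V unimodular), and F = V mod (m_1,...,m_m) columnwise, then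
p is in the row space of A iff p·F ≡ 0 mod (m_1,...,m_m). -/
theorem row_space_eq_solution_set {K : Type*} [Field K] {m : ℕ}
    (A U V : Matrix (Fin m) (Fin m) K[X])
    (hA : A.det ≠ 0) (hU : IsUnit U.det) (hV : IsUnit V.det)
    (M : Fin m → K[X]) (hM : ∀ j, M j ≠ 0)
    (hdvd : ∀ i j : Fin m, i ≤ j → M i ∣ M j)
    (hSmith : Matrix.diagonal M = U * A * V)
    (F : Matrix (Fin m) (Fin m) K[X])
    (hF : ∀ i j, F i j = V i j % M j)
    (p : Fin m → K[X]) :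
    p ∈ Submodule.span K[X] (Set.range fun i => A i) ↔
      ∀ j, M j ∣ Matrix.vecMul p F j := by
  -- p·F ≡ p·V mod M columnwise
  have hFV : ∀ j, (M j ∣ Matrix.vecMul p F j ↔ M j ∣ Matrix.vecMul p V j) := by
    intro j
    have hdiff : M j ∣ (Matrix.vecMul p V j - Matrix.vecMul p F j) := by
      have : Matrix.vecMul p V j - Matrix.vecMul p F j
          = ∑ i, p i * (V i j - F i j) := by
        simp [Matrix.vecMul, dotProduct, mul_sub, Finset.sum_sub_distrib]
      rw [this]
      refine Finset.dvd_sum fun i _ => ?_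
      have : V i j - F i j = M j * (V i j / M j) := by
        rw [hF i j, EuclideanDomain.mod_eq_sub_mul_div]
        ring
      rw [this]
      exact Dvd.dvd.mul_left (Dvd.dvd.mul_right dvd_rfl _) _
    constructor
    · intro h
      have := dvd_add hdiff h
      simpa using this
    · intro h
      have := dvd_sub h hdiff
      simpa using this
  rw [span_rows_iff_vecMul]
  have hVinv : V * V⁻¹ = 1 := Matrix.mul_nonsing_inv V hV
  have hUinv : U⁻¹ * U = 1 := Matrix.nonsing_inv_mul U hU
  constructor
  · rintro ⟨q, rfl⟩ j
    rw [hFV j]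
    have : Matrix.vecMul (Matrix.vecMul q A) V
        = Matrix.vecMul (Matrix.vecMul q U⁻¹) (Matrix.diagonal M) := by
      rw [hSmith]
      simp [Matrix.vecMul_vecMul, Matrix.mul_assoc, ← Matrix.mul_assoc U⁻¹ U, hUinv]
    rw [this, Matrix.vecMul_diagonal]
    exact Dvd.intro_left _ rfl
  · intro h
    have h' : ∀ j, M j ∣ Matrix.vecMul p V j := fun j => (hFV j).mp (h j)
    set r : Fin m → K[X] := fun j => Matrix.vecMul p V j / M j with hr
    have hpv : Matrix.vecMul p V = Matrix.vecMul r (Matrix.diagonal M) := by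
      funext j
      rw [Matrix.vecMul_diagonal, hr]
      rw [mul_comm]
      exact (EuclideanDomain.mul_div_cancel' (hM j) (h' j)).symm
    refine ⟨Matrix.vecMul r U, ?_⟩
    have : Matrix.vecMul (Matrix.vecMul (Matrix.vecMul r U) A) V
        = Matrix.vecMul p V := by
      rw [hpv, hSmith]
      simp [Matrix.vecMul_vecMul, Matrix.mul_assoc]
    have := congrArg (fun w => Matrix.vecMul w V⁻¹) this
    simpa [Matrix.vecMul_vecMul, Matrix.mul_assoc, hVinv] using this
end

section
/- Let m be a nonzero polynomial of degree σ over K[X], let s in Z^n be a shift, let F be an n-by-1 column of polynomials of degree less than σ, and let P be the s-Popov solution basis for (m, F), i.e., the unique matrix in s-Popov form whose rows form a basis of {p in K[X]^n : p·F ≡ 0 mod m}. Then the sum of the degrees of the diagonal entries of P is at most σ. -/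
open Polynomial

/-!
The `K`-linear map `q ↦ ∑ qᵢ Fᵢ mod M` from `∏ᵢ K[X]_{< deg Pᵢᵢ}` to `K[X] ⧸ (M)`, a space of
dimension `deg M`, is injective. Indeed, a `q` in its kernel is a solution, hence a combination
`∑ cᵢ Pᵢ` of the rows of `P`; if `c ≠ 0`, the degree conditions of the Popov form make some
column `j` of `∑ cᵢ Pᵢ` have degree at least `deg Pⱼⱼ` (predictable degree property), which
`deg qⱼ < deg Pⱼⱼ` forbids.
-/

/-- s-Popov form (pivots on the diagonal, monic, dominating their columns). -/
def IsPopov {K : Type*} [Field K] {n : ℕ} (s : Fin n → ℤ)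
    (P : Matrix (Fin n) (Fin n) K[X]) : Prop :=
  (∀ i, (P i i).Monic) ∧
  (∀ i j, i ≠ j → (P i j).degree < (P j j).degree) ∧
  (∀ i j, P i j ≠ 0 → ((P i j).natDegree : ℤ) + s j ≤ ((P i i).natDegree : ℤ) + s i) ∧
  (∀ i j, i < j → P i j ≠ 0 → ((P i j).natDegree : ℤ) + s j < ((P i i).natDegree : ℤ) + s i)

namespace Polynomial

theorem degree_sum_eq_of_degree_lt {ι R : Type*} [Semiring R] {s : Finset ι} {f : ι → R[X]}
    {j : ι} (hj : j ∈ s) (h : ∀ i ∈ s, i ≠ j → (f i).degree < (f j).degree) :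
    (∑ i ∈ s, f i).degree = (f j).degree := by
  classical
  have h' : ∀ i ∈ s.erase j, (f i).degree < (f j).degree := fun i hi =>
    h i (Finset.mem_of_mem_erase hi) (Finset.ne_of_mem_erase hi)
  rw [← Finset.add_sum_erase s f hj]
  rcases (s.erase j).eq_empty_or_nonempty with he | ⟨i, hi⟩
  · rw [he, Finset.sum_empty, add_zero]
  · refine degree_add_eq_left_of_degree_lt ((degree_sum_le _ _).trans_lt ?_)
    exact (Finset.sup_lt_iff (bot_le.trans_lt (h' i hi))).2 h'

variable {K : Type*} [Field K]

theorem finrank_pi_degreeLT {ι : Type*} [Fintype ι] (d : ι → ℕ) :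
    Module.finrank K (∀ i, degreeLT K (d i)) = ∑ i, d i := by
  simp [Module.finrank_pi_fintype, (degreeLTEquiv K _).finrank_eq]

noncomputable def combinationMod {ι : Type*} [Fintype ι] (M : K[X]) (F : ι → K[X]) (d : ι → ℕ) :
    (∀ i, degreeLT K (d i)) →ₗ[K] K[X] ⧸ Ideal.span {M} :=
  (Ideal.Quotient.mkₐ K (Ideal.span {M})).toLinearMap ∘ₗ
    ∑ i, LinearMap.mulRight K (F i) ∘ₗ (degreeLT K (d i)).subtype ∘ₗ LinearMap.proj i

theorem combinationMod_eq_zero_iff {ι : Type*} [Fintype ι] {M : K[X]} {F : ι → K[X]}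
    {d : ι → ℕ} {q : ∀ i, degreeLT K (d i)} :
    combinationMod M F d q = 0 ↔ M ∣ ∑ i, (q i : K[X]) * F i := by
  rw [← Ideal.mem_span_singleton, ← Ideal.Quotient.eq_zero_iff_mem]
  simp [combinationMod]

end Polynomial

namespace IsPopov

variable {K : Type*} [Field K] {n : ℕ} {s : Fin n → ℤ} {P : Matrix (Fin n) (Fin n) K[X]}

theorem degree_mul_lt (hP : IsPopov s P) {a b : K[X]} {i j : Fin n} (hb : b ≠ 0)
    (hlt : toLex ((a.natDegree + (P i i).natDegree : ℤ) + s i, i) <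
      toLex ((b.natDegree + (P j j).natDegree : ℤ) + s j, j)) :
    (a * P i j).degree < (b * P j j).degree := by
  obtain ⟨hmonic, -, hle, hlt'⟩ := hP
  have hbP : b * P j j ≠ 0 := mul_ne_zero hb (hmonic j).ne_zero
  by_cases haP : a * P i j = 0
  · rw [haP, degree_zero]
    exact bot_lt_iff_ne_bot.2 (degree_ne_bot.2 hbP)
  obtain ⟨ha, hPij⟩ := mul_ne_zero_iff.1 haP
  rw [degree_eq_natDegree haP, degree_eq_natDegree hbP, Nat.cast_lt,
    natDegree_mul ha hPij, natDegree_mul hb (hmonic j).ne_zero]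
  have := hle i j hPij
  rcases Prod.Lex.toLex_lt_toLex.1 hlt with hw | ⟨hw, hij⟩
  · omega
  · have := hlt' i j hij hPij
    omega

theorem exists_degree_sum_mul_eq (hP : IsPopov s P) {c : Fin n → K[X]} (hc : c ≠ 0) :
    ∃ j, c j ≠ 0 ∧ (∑ i, c i * P i j).degree = (c j * P j j).degree := by
  classical
  set S := Finset.univ.filter (c · ≠ 0)
  have hS : S.Nonempty := by
    obtain ⟨i, hi⟩ := Function.ne_iff.1 hc
    exact ⟨i, by simpa [S] using hi⟩
  -- `j` maximises the shifted degree of `cᵢ Pᵢᵢ`, ties broken towards the larger index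
  obtain ⟨j, hjS, hmax⟩ := S.exists_max_image
    (fun i => toLex (((c i).natDegree + (P i i).natDegree : ℤ) + s i, i)) hS
  have hcj : c j ≠ 0 := (Finset.mem_filter.1 hjS).2
  refine ⟨j, hcj, degree_sum_eq_of_degree_lt (Finset.mem_univ j) fun i _ hij => ?_⟩
  by_cases hci : c i = 0
  · rw [hci, zero_mul, degree_zero]
    exact bot_lt_iff_ne_bot.2 (degree_ne_bot.2 (mul_ne_zero hcj (hP.1 j).ne_zero))
  refine hP.degree_mul_lt hcj ((hmax i (by simpa [S] using hci)).lt_of_ne fun h => hij ?_)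
  exact congrArg Prod.snd (toLex.injective h)

theorem eq_zero_of_mem_span_of_degree_lt (hP : IsPopov s P) {q : Fin n → K[X]}
    (hq : q ∈ Submodule.span K[X] (Set.range fun i => P i))
    (hdeg : ∀ i, (q i).degree < (P i i).natDegree) : q = 0 := by
  obtain ⟨c, rfl⟩ := (Submodule.mem_span_range_iff_exists_fun K[X]).1 hq
  by_cases hc : c = 0
  · simp [hc]
  obtain ⟨j, hcj, hj⟩ := hP.exists_degree_sum_mul_eq hc
  refine absurd (hdeg j) (not_lt.2 ?_)
  simp only [Finset.sum_apply, Pi.smul_apply, smul_eq_mul, hj]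
  rw [degree_mul, degree_eq_natDegree hcj, degree_eq_natDegree (hP.1 j).ne_zero]
  exact_mod_cast Nat.le_add_left _ _

end IsPopov

theorem sum_pivot_degrees_le_general {K : Type*} [Field K] {n : ℕ}
    (M : K[X]) (hM : M ≠ 0) (F : Fin n → K[X])
    (s : Fin n → ℤ) (P : Matrix (Fin n) (Fin n) K[X])
    (hPopov : IsPopov s P)
    (hspan : ∀ p : Fin n → K[X], (M ∣ ∑ j, p j * F j) →
      p ∈ Submodule.span K[X] (Set.range fun i => P i)) :
    ∑ i, (P i i).natDegree ≤ M.natDegree := by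
  have : Module.Finite K (K[X] ⧸ Ideal.span {M}) := (AdjoinRoot.powerBasis hM).finite
  have hinj : Function.Injective (combinationMod M F fun i => (P i i).natDegree) := by
    refine (injective_iff_map_eq_zero _).2 fun q hq => ?_
    have hq0 := hPopov.eq_zero_of_mem_span_of_degree_lt
      (hspan _ (combinationMod_eq_zero_iff.1 hq)) fun i => mem_degreeLT.1 (q i).2
    exact funext fun i => Subtype.ext (congrFun hq0 i)
  calc ∑ i, (P i i).natDegree = Module.finrank K (∀ i, degreeLT K (P i i).natDegree) :=
        (finrank_pi_degreeLT _).symm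
    _ ≤ Module.finrank K (K[X] ⧸ Ideal.span {M}) := LinearMap.finrank_le_finrank_of_injective hinj
    _ = M.natDegree := finrank_quotient_span_eq_natDegree

/-- if P is the s-Popov solution basis for (m, F) with m of degree
σ and deg F < σ, then the sum of the degrees of the diagonal entries of P is at
most σ. -/
theorem sum_pivot_degrees_le {K : Type*} [Field K] {n : ℕ}
    (M : K[X]) (hM : M ≠ 0) (F : Fin n → K[X]) (hF : ∀ i, (F i).degree < M.degree)
    (s : Fin n → ℤ) (P : Matrix (Fin n) (Fin n) K[X])
    (hPopov : IsPopov s P)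
    (hsol : ∀ i, M ∣ ∑ j, P i j * F j)
    (hspan : ∀ p : Fin n → K[X], (M ∣ ∑ j, p j * F j) →
      p ∈ Submodule.span K[X] (Set.range fun i => P i)) :
    ∑ i, (P i i).natDegree ≤ M.natDegree :=
  sum_pivot_degrees_le_general M hM F s P hPopov hspan
end

section
/- Let m = (m_1,...,m_n) be nonzero polynomials over K[X], F an m-by-n matrix over K[X] with deg of column j of F less than deg(m_j), s a shift in Z^m, and w in Z^n with max(w) ≤ min(s). Set N = [F^T | diag(m_1,...,m_n)]^T, an (m+n)-by-n matrix, and u = (s, w) in Z^{m+n}. Then for any row vector [p | q] in K[X]^{1×(m+n)} with [p | q]·N = 0 and p ≠ 0, the u-pivot index of [p | q] lies in {1,...,m}; i.e., the u-degree of [p|q] is attained within the first m entries. -/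
/-!
Each `F i j` has degree below `deg M_j`, so `q_j M_j = -∑ i, p_i F_ij` forces
`deg q_j < max_i deg p_i`. Since `w_j ≤ s_k` for the index `k` realising that maximum,
every shifted degree in the `q`-part is strictly below `deg p_k + s_k`, which is at most
the largest shifted degree in the `p`-part.
-/

open Polynomial

namespace Polynomial

variable {R ι : Type*}

theorem degree_sum_mul_lt [Semiring R] (s : Finset ι) (p f : ι → R[X]) (g : R[X]) {d : ℕ}
    (hp : ∀ i ∈ s, (p i).natDegree ≤ d) (hf : ∀ i ∈ s, (f i).degree < g.degree) :
    (∑ i ∈ s, p i * f i).degree < ↑(d + g.natDegree) := by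
  refine (degree_sum_le _ _).trans_lt
    ((Finset.sup_lt_iff (WithBot.bot_lt_coe _)).2 fun i hi => ?_)
  by_cases hfi : f i = 0
  · simp [hfi]
  have hfg : (f i).natDegree < g.natDegree := natDegree_lt_natDegree hfi (hf i hi)
  have hpi := hp i hi
  refine degree_le_natDegree.trans_lt ?_
  exact_mod_cast natDegree_mul_le.trans_lt (by omega)

theorem degree_lt_of_sum_mul_add_mul_eq_zero [Ring R] [NoZeroDivisors R] (s : Finset ι)
    (p f : ι → R[X]) (g q : R[X]) {d : ℕ} (hg : g ≠ 0)
    (hp : ∀ i ∈ s, (p i).natDegree ≤ d) (hf : ∀ i ∈ s, (f i).degree < g.degree)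
    (h : ∑ i ∈ s, p i * f i + q * g = 0) :
    q.degree < d := by
  by_cases hq : q = 0
  · simp [hq]
  have hqg : (q * g).degree < ↑(d + g.natDegree) := by
    rw [eq_neg_of_add_eq_zero_right h, degree_neg]
    exact degree_sum_mul_lt s p f g hp hf
  rw [← natDegree_lt_iff_degree_lt (mul_ne_zero hq hg), natDegree_mul hq hg] at hqg
  exact (natDegree_lt_iff_degree_lt hq).1 (by omega)

end Polynomial

theorem pivot_in_first_block_general {K : Type*} [Field K] {m n : ℕ}
    (M : Fin n → K[X])
    (F : Matrix (Fin m) (Fin n) K[X])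
    (hF : ∀ i j, (F i j).degree < (M j).degree)
    (s : Fin m → ℤ) (w : Fin n → ℤ) (hws : ∀ j i, w j ≤ s i)
    (p : Fin m → K[X]) (q : Fin n → K[X]) (hp : p ≠ 0)
    (hnull : ∀ j, (∑ i, p i * F i j) + q j * M j = 0) :
    ∃ i, p i ≠ 0 ∧
      (∀ k, p k ≠ 0 → ((p k).natDegree : ℤ) + s k ≤ ((p i).natDegree : ℤ) + s i) ∧
      (∀ j, q j ≠ 0 → ((q j).natDegree : ℤ) + w j < ((p i).natDegree : ℤ) + s i) := by
  classical
  set S := Finset.univ.filter (fun k => p k ≠ 0)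
  have hS : S.Nonempty := by
    obtain ⟨k, hk⟩ := Function.ne_iff.1 hp
    exact ⟨k, by simpa [S] using hk⟩
  obtain ⟨i, hiS, hi⟩ := S.exists_max_image (fun k => ((p k).natDegree : ℤ) + s k) hS
  obtain ⟨k, hkS, hk⟩ := S.exists_max_image (fun k => (p k).natDegree) hS
  simp only [S, Finset.mem_filter, Finset.mem_univ, true_and] at hiS hkS hi hk
  refine ⟨i, hiS, hi, fun j hqj => ?_⟩
  have hdeg : (q j).natDegree < (p k).natDegree := by
    rw [natDegree_lt_iff_degree_lt hqj]
    refine degree_lt_of_sum_mul_add_mul_eq_zero Finset.univ p (F · j) (M j) (q j)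
      (ne_zero_of_degree_gt (hF k j)) (fun b _ => ?_) (fun b _ => hF b j) (hnull j)
    by_cases hb : p b = 0
    · simp [hb]
    · exact hk b hb
  have := hi k hkS
  have := hws j k
  omega

/-- for N = [Fᵀ | diag(m)]ᵀ and u = (s, w) with max(w) ≤ min(s),
any [p | q] in the left nullspace of N with p ≠ 0 has its u-pivot index in the
first m entries: the u-degree is attained within the p-part, strictly
dominating the q-part. -/
theorem pivot_in_first_block {K : Type*} [Field K] {m n : ℕ}
    (M : Fin n → K[X]) (hM : ∀ j, M j ≠ 0)
    (F : Matrix (Fin m) (Fin n) K[X])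
    (hF : ∀ i j, (F i j).degree < (M j).degree)
    (s : Fin m → ℤ) (w : Fin n → ℤ) (hws : ∀ j i, w j ≤ s i)
    (p : Fin m → K[X]) (q : Fin n → K[X]) (hp : p ≠ 0)
    (hnull : ∀ j, (∑ i, p i * F i j) + q j * M j = 0) :
    ∃ i, p i ≠ 0 ∧
      (∀ k, p k ≠ 0 → ((p k).natDegree : ℤ) + s k ≤ ((p i).natDegree : ℤ) + s i) ∧
      (∀ j, q j ≠ 0 → ((q j).natDegree : ℤ) + w j < ((p i).natDegree : ℤ) + s i) :=
  pivot_in_first_block_general M F hF s w hws p q hp hnull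
end

section
/- Let M be a nonsingular m-by-m matrix over K[X] and let C be a matrix over K[X] with m columns, and consider the block matrix B = [[M, 0],[C, I]]. Suppose that M is in s-Popov form and that deg(C_{jk}) < deg(M_{kk}) for all j, k. Then B is in (s, t, ..., t)-Popov form for any t ≥ max(s) + deg(M). -/
open Polynomial

/-- if M is nonsingular and in s-Popov form and every entry of C
in column k has degree < deg(M_{kk}), then the block matrix [[M, 0],[C, I]] is
in (s, t, ..., t)-Popov form for any t ≥ max(s) + deg(M). -/
theorem block_matrix_popov {K : Type*} [Field K] {r q : ℕ}
    (s : Fin r → ℤ) (M : Matrix (Fin r) (Fin r) K[X]) (hMns : M.det ≠ 0)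
    (hM : IsPopov s M)
    (C : Matrix (Fin q) (Fin r) K[X])
    (hC : ∀ j k, (C j k).degree < (M k k).degree)
    (t : ℤ)
    (ht : ∀ i : Fin r,
      s i + ((Finset.univ.sup fun p : Fin r × Fin r => (M p.1 p.2).natDegree : ℕ) : ℤ) ≤ t) :
    IsPopov (fun i => Fin.addCases (fun a => s a) (fun _ => t) i)
      (Matrix.reindex finSumFinEquiv finSumFinEquiv
        (Matrix.fromBlocks M 0 C (1 : Matrix (Fin q) (Fin q) K[X]))) := by
  obtain ⟨h1, h2, h3, h4⟩ := hM
  have key : ∀ (j : Fin q) (k : Fin r), C j k ≠ 0 →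
      ((C j k).natDegree : ℤ) + s k < t := by
    intro j k hne
    have hMne : M k k ≠ 0 := (h1 k).ne_zero
    have hlt : (C j k).natDegree < (M k k).natDegree :=
      Polynomial.natDegree_lt_natDegree hne (hC j k)
    have hsup : (M k k).natDegree ≤
        Finset.univ.sup fun p : Fin r × Fin r => (M p.1 p.2).natDegree :=
      Finset.le_sup (f := fun p : Fin r × Fin r => (M p.1 p.2).natDegree)
        (Finset.mem_univ (k, k))
    have := ht k
    omega
  refine ⟨?_, ?_, ?_, ?_⟩
  · intro i
    obtain ⟨i', rfl⟩ := finSumFinEquiv.surjective i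
    cases i' with
    | inl a => simpa using h1 a
    | inr b => simp [Matrix.one_apply_eq, Polynomial.monic_one]
  · intro i j hij
    obtain ⟨i', rfl⟩ := finSumFinEquiv.surjective i
    obtain ⟨j', rfl⟩ := finSumFinEquiv.surjective j
    cases i' with
    | inl a =>
      cases j' with
      | inl b =>
        have hab : a ≠ b := fun h => hij (by rw [h])
        simpa using h2 a b hab
      | inr b =>
        simp [Matrix.one_apply_eq]
    | inr a =>
      cases j' with
      | inl b => simpa using hC a b
      | inr b =>
        have hab : a ≠ b := fun h => hij (by rw [h])
        simp [Matrix.one_apply_eq, Matrix.one_apply_ne hab]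
  · intro i j hne
    obtain ⟨i', rfl⟩ := finSumFinEquiv.surjective i
    obtain ⟨j', rfl⟩ := finSumFinEquiv.surjective j
    cases i' with
    | inl a =>
      cases j' with
      | inl b => simp only [Matrix.reindex_apply, Equiv.symm_apply_apply,
          Matrix.submatrix_apply, Matrix.fromBlocks_apply₁₁] at hne ⊢
                 simpa using h3 a b hne
      | inr b => simp at hne
    | inr a =>
      cases j' with
      | inl b =>
        simp only [Matrix.reindex_apply, Equiv.symm_apply_apply,
          Matrix.submatrix_apply, Matrix.fromBlocks_apply₂₁,
          Matrix.fromBlocks_apply₂₂] at hne ⊢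
        simp only [finSumFinEquiv_apply_left, finSumFinEquiv_apply_right,
          Fin.addCases_left, Fin.addCases_right, Matrix.one_apply_eq]
        have := key a b hne
        simp only [Polynomial.natDegree_one, Nat.cast_zero]
        omega
      | inr b =>
        rcases eq_or_ne a b with rfl | hab
        · simp
        · simp [Matrix.one_apply_ne hab] at hne
  · intro i j hij hne
    obtain ⟨i', rfl⟩ := finSumFinEquiv.surjective i
    obtain ⟨j', rfl⟩ := finSumFinEquiv.surjective j
    cases i' with
    | inl a =>
      cases j' with
      | inl b =>
        have hab : a < b := by
          rw [finSumFinEquiv_apply_left, finSumFinEquiv_apply_left, Fin.lt_def,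
            Fin.coe_castAdd, Fin.coe_castAdd] at hij
          exact hij
        simp only [Matrix.reindex_apply, Equiv.symm_apply_apply,
          Matrix.submatrix_apply, Matrix.fromBlocks_apply₁₁] at hne ⊢
        simpa using h4 a b hab hne
      | inr b => simp at hne
    | inr a =>
      cases j' with
      | inl b =>
        exfalso
        rw [finSumFinEquiv_apply_right, finSumFinEquiv_apply_left, Fin.lt_def,
          Fin.coe_natAdd, Fin.coe_castAdd] at hij
        omega
      | inr b =>
        have hab : a ≠ b := by
          rintro rfl; exact lt_irrefl _ hij
        simp [Matrix.one_apply_ne hab] at hne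
end

section
/- Let A be a nonsingular m-by-m matrix over K[X], s a shift in Z^m, and P the s-Popov form of A (the unique matrix in s-Popov form left-unimodularly equivalent to A). Let B be in K[X]^{r×m} and consider the N-by-N block matrix L = [[A,0],[B,I]], where N = m + r. Let R be the remainder of B modulo P, i.e., the unique matrix with column degrees strictly less than the corresponding column degrees of P such that R = B + Q·P for some Q over K[X]. Then [[P, 0],[R, I]] is left-unimodularly equivalent to L, and for u = (s, t,...,t) with t ≥ max(s) + deg(P), the matrix [[P, 0],[R, I]] is the u-Popov form of L. -/
open Polynomial

/-- let P be the s-Popov form of a nonsingular A, let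
L = [[A,0],[B,I]], and let R be the remainder of B modulo P (R = B + Q·P with
column degrees of R less than those of P). Then [[P,0],[R,I]] is
left-unimodularly equivalent to L, and for u = (s,t,...,t) with
t ≥ max(s) + deg(P) it is the u-Popov form of L. -/
theorem block_popov_form {K : Type*} [Field K] {m r : ℕ}
    (s : Fin m → ℤ) (A P W : Matrix (Fin m) (Fin m) K[X])
    (hA : A.det ≠ 0) (hW : IsUnit W.det) (hPW : P = W * A)
    (hPopov : IsPopov s P)
    (B R Q : Matrix (Fin r) (Fin m) K[X])
    (hR : R = B + Q * P)
    (hRdeg : ∀ i j, (R i j).degree < (P j j).degree)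
    (t : ℤ)
    (ht : ∀ i : Fin m,
      s i + ((Finset.univ.sup fun p : Fin m × Fin m => (P p.1 p.2).natDegree : ℕ) : ℤ) ≤ t) :
    (∃ W' : Matrix (Fin m ⊕ Fin r) (Fin m ⊕ Fin r) K[X], IsUnit W'.det ∧
        Matrix.fromBlocks P 0 R (1 : Matrix (Fin r) (Fin r) K[X]) =
          W' * Matrix.fromBlocks A 0 B (1 : Matrix (Fin r) (Fin r) K[X])) ∧
    IsPopov (fun i => Fin.addCases (fun a => s a) (fun _ => t) i)
      (Matrix.reindex finSumFinEquiv finSumFinEquiv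
        (Matrix.fromBlocks P 0 R (1 : Matrix (Fin r) (Fin r) K[X]))) := by
  obtain ⟨h1, h2, h3, h4⟩ := hPopov
  constructor
  · refine ⟨Matrix.fromBlocks W 0 (Q * W) 1, ?_, ?_⟩
    · rw [Matrix.det_fromBlocks_zero₁₂]
      simpa using hW
    · rw [Matrix.fromBlocks_multiply]
      simp only [Matrix.zero_mul, Matrix.mul_zero, add_zero, zero_add, Matrix.one_mul,
        Matrix.mul_one]
      rw [← hPW, hR]
      congr 1
      rw [Matrix.mul_assoc, ← hPW, add_comm]
  · refine ⟨?_, ?_, ?_, ?_⟩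
    · intro i
      obtain ⟨i', rfl⟩ := finSumFinEquiv.surjective i
      cases i' with
      | inl a => simpa using h1 a
      | inr b => simp [Matrix.one_apply]
    · intro i j hij
      obtain ⟨i', rfl⟩ := finSumFinEquiv.surjective i
      obtain ⟨j', rfl⟩ := finSumFinEquiv.surjective j
      cases i' with
      | inl a =>
        cases j' with
        | inl a' =>
          have : a ≠ a' := fun h => hij (by rw [h])
          simpa using h2 a a' this
        | inr b => simp [Matrix.one_apply]
      | inr b =>
        cases j' with
        | inl a => simpa using hRdeg b a
        | inr b' =>
          have : b ≠ b' := fun h => hij (by rw [h])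
          simp [Matrix.one_apply, this]
    · intro i j hne
      obtain ⟨i', rfl⟩ := finSumFinEquiv.surjective i
      obtain ⟨j', rfl⟩ := finSumFinEquiv.surjective j
      cases i' with
      | inl a =>
        cases j' with
        | inl a' =>
          simp only [Matrix.reindex_apply, Matrix.submatrix_apply, Equiv.symm_apply_apply,
            Matrix.fromBlocks_apply₁₁] at hne ⊢
          simpa using h3 a a' hne
        | inr b => simp at hne
      | inr b =>
        cases j' with
        | inl a =>
          simp only [Matrix.reindex_apply, Matrix.submatrix_apply, Equiv.symm_apply_apply,
            Matrix.fromBlocks_apply₂₁] at hne ⊢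
          simp only [finSumFinEquiv_apply_left, finSumFinEquiv_apply_right,
            Fin.addCases_left, Fin.addCases_right, Matrix.one_apply_eq, natDegree_one,
            Nat.cast_zero, zero_add]
          have hlt : (R b a).natDegree < (P a a).natDegree :=
            Polynomial.natDegree_lt_natDegree hne (hRdeg b a)
          have hsup : (P a a).natDegree ≤
              Finset.univ.sup fun p : Fin m × Fin m => (P p.1 p.2).natDegree :=
            Finset.le_sup (f := fun p : Fin m × Fin m => (P p.1 p.2).natDegree) (Finset.mem_univ (a, a))
          have := ht a
          omega
        | inr b' =>
          by_cases hbb : b = b'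
          · subst hbb; simp
          · simp [Matrix.one_apply, hbb] at hne
    · intro i j hij hne
      obtain ⟨i', rfl⟩ := finSumFinEquiv.surjective i
      obtain ⟨j', rfl⟩ := finSumFinEquiv.surjective j
      cases i' with
      | inl a =>
        cases j' with
        | inl a' =>
          have ha : a < a' := by
            simp only [finSumFinEquiv_apply_left, Fin.lt_def, Fin.coe_castAdd] at hij
            exact hij
          simp only [Matrix.reindex_apply, Matrix.submatrix_apply, Equiv.symm_apply_apply,
            Matrix.fromBlocks_apply₁₁] at hne ⊢
          simpa using h4 a a' ha hne
        | inr b => simp at hne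
      | inr b =>
        cases j' with
        | inl a =>
          exfalso
          simp only [finSumFinEquiv_apply_left, finSumFinEquiv_apply_right, Fin.lt_def,
            Fin.coe_castAdd, Fin.coe_natAdd] at hij
          omega
        | inr b' =>
          by_cases hbb : b = b'
          · subst hbb; exact (lt_irrefl _ hij).elim
          · simp [Matrix.one_apply, hbb] at hne
end

section
/- Let P1 be a basis (as rows of a square matrix over K[X]) of the solution module S1 = {p in K[X]^m : p·F1 ≡ 0 mod M1}, let R = P1·F2 mod M2, and let P2 be a basis of {q in K[X]^m : q·R ≡ 0 mod M2}. Then P2·P1 is a basis of the solution module S = {p in K[X]^m : p·F1 ≡ 0 mod M1 and p·F2 ≡ 0 mod M2}, where F1, F2 are matrices over K[X] with appropriate column counts and M1, M2 are tuples of nonzero polynomials. -/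
open Polynomial

/-- if the rows of P1 form a basis of the solutions of the first
modular system, R = P1·F2 mod M2, and the rows of P2 form a basis of the
solutions of (M2, R), then the rows of P2·P1 form a basis of the solutions of
the combined system. -/
theorem basis_product_of_solution_bases {K : Type*} [Field K] {m n1 n2 : ℕ}
    (M1 : Fin n1 → K[X]) (hM1 : ∀ j, M1 j ≠ 0)
    (M2 : Fin n2 → K[X]) (hM2 : ∀ j, M2 j ≠ 0)
    (F1 : Matrix (Fin m) (Fin n1) K[X]) (F2 : Matrix (Fin m) (Fin n2) K[X])
    (P1 P2 : Matrix (Fin m) (Fin m) K[X])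
    (hP1span : ∀ p : Fin m → K[X],
      (∀ j, M1 j ∣ Matrix.vecMul p F1 j) ↔
        p ∈ Submodule.span K[X] (Set.range fun i => P1 i))
    (hP1li : LinearIndependent K[X] (fun i => P1 i))
    (R : Matrix (Fin m) (Fin n2) K[X])
    (hR : ∀ i j, R i j = (P1 * F2) i j % M2 j)
    (hP2span : ∀ q : Fin m → K[X],
      (∀ j, M2 j ∣ Matrix.vecMul q R j) ↔
        q ∈ Submodule.span K[X] (Set.range fun i => P2 i))
    (hP2li : LinearIndependent K[X] (fun i => P2 i)) :
    (∀ p : Fin m → K[X],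
      ((∀ j, M1 j ∣ Matrix.vecMul p F1 j) ∧ (∀ j, M2 j ∣ Matrix.vecMul p F2 j)) ↔
        p ∈ Submodule.span K[X] (Set.range fun i => (P2 * P1) i)) ∧
    LinearIndependent K[X] (fun i => (P2 * P1) i) := by
  classical
  have hsum : ∀ {n : ℕ} (c : Fin m → K[X]) (A : Matrix (Fin m) (Fin n) K[X]),
      ∑ i, c i • A i = Matrix.vecMul c A := by
    intro n c A
    ext j
    simp [Matrix.vecMul, dotProduct, Finset.sum_apply]
  have hmem : ∀ (A : Matrix (Fin m) (Fin m) K[X]) (p : Fin m → K[X]),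
      p ∈ Submodule.span K[X] (Set.range fun i => A i) ↔
        ∃ c, Matrix.vecMul c A = p := by
    intro A p
    rw [Submodule.mem_span_range_iff_exists_fun]
    constructor
    · rintro ⟨c, hc⟩; exact ⟨c, by rw [← hsum]; exact hc⟩
    · rintro ⟨c, hc⟩; exact ⟨c, by rw [hsum]; exact hc⟩
  have hdvdR : ∀ (lam : Fin m → K[X]) (j : Fin n2),
      (M2 j ∣ Matrix.vecMul (Matrix.vecMul lam P1) F2 j ↔
        M2 j ∣ Matrix.vecMul lam R j) := by
    intro lam j
    have h1 : Matrix.vecMul (Matrix.vecMul lam P1) F2 = Matrix.vecMul lam (P1 * F2) :=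
      Matrix.vecMul_vecMul lam P1 F2
    have hdiff : M2 j ∣ (Matrix.vecMul lam (P1 * F2) j - Matrix.vecMul lam R j) := by
      have heq : Matrix.vecMul lam (P1 * F2) j - Matrix.vecMul lam R j
          = ∑ i, lam i * ((P1 * F2) i j - R i j) := by
        simp [Matrix.vecMul, dotProduct, ← Finset.sum_sub_distrib, mul_sub]
      rw [heq]
      refine Finset.dvd_sum fun i _ => Dvd.dvd.mul_left ?_ _
      refine ⟨(P1 * F2) i j / M2 j, ?_⟩
      rw [hR i j, sub_eq_iff_eq_add]
      exact (EuclideanDomain.div_add_mod _ _).symm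
    rw [h1]
    constructor
    · intro h
      simpa using dvd_sub h hdiff
    · intro h
      simpa using dvd_add hdiff h
  constructor
  · intro p
    constructor
    · rintro ⟨h1, h2⟩
      obtain ⟨lam, hlam⟩ := (hmem P1 p).mp ((hP1span p).mp h1)
      have hlR : ∀ j, M2 j ∣ Matrix.vecMul lam R j := by
        intro j
        exact (hdvdR lam j).mp (by rw [hlam]; exact h2 j)
      obtain ⟨mu, hmu⟩ := (hmem P2 lam).mp ((hP2span lam).mp hlR)
      refine (hmem (P2 * P1) p).mpr ⟨mu, ?_⟩
      rw [← Matrix.vecMul_vecMul, hmu, hlam]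
    · intro hp
      obtain ⟨mu, hmu⟩ := (hmem (P2 * P1) p).mp hp
      set lam := Matrix.vecMul mu P2 with hlamdef
      have hplam : Matrix.vecMul lam P1 = p := by
        rw [hlamdef, Matrix.vecMul_vecMul]; exact hmu
      have hlamR : ∀ j, M2 j ∣ Matrix.vecMul lam R j :=
        (hP2span lam).mpr ((hmem P2 lam).mpr ⟨mu, rfl⟩)
      constructor
      · exact (hP1span p).mpr ((hmem P1 p).mpr ⟨lam, hplam⟩)
      · intro j
        have := (hdvdR lam j).mpr (hlamR j)
        rwa [hplam] at this
  · rw [Fintype.linearIndependent_iff]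
    intro c hc
    rw [hsum] at hc
    have h2 : Matrix.vecMul (Matrix.vecMul c P2) P1 = 0 := by
      rwa [Matrix.vecMul_vecMul]
    have h3 : ∀ i, Matrix.vecMul c P2 i = 0 := by
      refine Fintype.linearIndependent_iff.mp hP1li _ ?_
      rw [hsum]; exact h2
    have h4 : Matrix.vecMul c P2 = 0 := funext h3
    exact Fintype.linearIndependent_iff.mp hP2li c (by rw [hsum]; exact h4)
end

section
/- Let m be a nonzero polynomial over K[X], F an n-by-1 column with deg(F) < deg(m), and let i < n. Suppose P is the s-Popov solution basis for (m, F) (with s non-decreasing) and its top-right i-by-(n-i) block is zero. Write P1 for the top-left i-by-i block of P. Then P1 is the (s_1,...,s_i)-Popov solution basis for (m, F1), where F1 consists of the first i entries of F; i.e., every solution p in K[X]^{1×i} of p·F1 ≡ 0 mod m lies in the row space of P1, and P1 is in (s_1,...,s_i)-Popov form. -/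
open Polynomial

/-!
Extending a solution `p` of the truncated system by zeros gives a solution of the full system,
hence a combination `v ᵥ* P` of the rows of `P`. Beyond column `i` only the trailing rows of `P`
are nonzero, so the trailing part of `v` is annihilated by the trailing diagonal block. That
block has a nonzero diagonal dominating its columns in degree, so the entry of `v` of largest
degree would contribute a leading term that nothing cancels: the trailing part of `v` vanishes
and `p` is a combination of the rows of the leading block.
-/

open Function

namespace Matrix

variable {R ι κ : Type*} [Semiring R] [NoZeroDivisors R] [Fintype ι]

theorem eq_zero_of_vecMul_eq_zero_of_degree_lt_diag (P : Matrix ι ι R[X])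
    (hdiag : ∀ j, P j j ≠ 0) (hdeg : ∀ k j, k ≠ j → (P k j).degree < (P j j).degree)
    {v : ι → R[X]} (hv : v ᵥ* P = 0) : v = 0 := by
  classical
  by_contra hne
  have : Nonempty ι := by
    obtain ⟨j, -⟩ := ne_iff.mp hne
    exact ⟨j⟩
  obtain ⟨j, -, hmax⟩ :=
    Finset.exists_max_image Finset.univ (fun k => (v k).degree) Finset.univ_nonempty
  have hj : v j ≠ 0 := by
    refine fun hj => hne (funext fun k => ?_)
    simpa [hj] using hmax k (Finset.mem_univ k)
  have hlead : v j * P j j ≠ 0 := mul_ne_zero hj (hdiag j)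
  have hbot : ⊥ < (v j * P j j).degree := bot_lt_iff_ne_bot.mpr (degree_ne_bot.mpr hlead)
  have hrest : (∑ k ∈ Finset.univ.erase j, v k * P k j).degree < (v j * P j j).degree := by
    refine (degree_sum_le _ _).trans_lt ((Finset.sup_lt_iff hbot).mpr fun k hk => ?_)
    by_cases hk0 : v k = 0
    · rwa [hk0, zero_mul, degree_zero]
    calc (v k * P k j).degree ≤ (v k).degree + (P k j).degree := degree_mul_le _ _
      _ < (v j).degree + (P j j).degree :=
          WithBot.add_lt_add_of_le_of_lt (degree_ne_bot.mpr hk0) (hmax k (Finset.mem_univ k))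
            (hdeg k j (Finset.ne_of_mem_erase hk))
      _ = (v j * P j j).degree := degree_mul.symm
  have hcol : (v ᵥ* P) j = v j * P j j + ∑ k ∈ Finset.univ.erase j, v k * P k j :=
    (Finset.add_sum_erase _ _ (Finset.mem_univ j)).symm
  rw [hv, Pi.zero_apply] at hcol
  exact hlead (degree_eq_bot.mp (by rw [← degree_add_eq_left_of_degree_lt hrest, ← hcol,
    degree_zero]))

theorem eq_zero_off_range_of_vecMul_eq_zero_off_range (e : κ → ι) (P : Matrix ι ι R[X])
    (hdiag : ∀ j, P j j ≠ 0) (hdeg : ∀ k j, k ≠ j → (P k j).degree < (P j j).degree)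
    (hblock : ∀ a k, k ∉ Set.range e → P (e a) k = 0)
    {v : ι → R[X]} (hv : ∀ k ∉ Set.range e, (v ᵥ* P) k = 0) :
    ∀ c ∉ Set.range e, v c = 0 := by
  classical
  have htrail := eq_zero_of_vecMul_eq_zero_of_degree_lt_diag
    (P.submatrix ((↑) : {c // c ∉ Set.range e} → ι) (↑)) (fun j => hdiag j)
    (fun k j hkj => hdeg k j (Subtype.coe_injective.ne hkj)) (v := fun c => v c) <| by
      funext k
      have hlead : ∑ c : {c // c ∈ Set.range e}, v c * P c k = 0 := by
        refine Finset.sum_eq_zero ?_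
        rintro ⟨_, a, rfl⟩ -
        rw [hblock a k k.2, mul_zero]
      rw [Pi.zero_apply, ← hv k k.2]
      simp only [vecMul, dotProduct, submatrix_apply]
      rw [← Fintype.sum_subtype_add_sum_subtype (· ∈ Set.range e), hlead, zero_add]
  exact fun c hc => congrFun htrail ⟨c, hc⟩

theorem comp_mem_span_submatrix_of_mem_span [Fintype κ] {e : κ → ι} (he : Injective e)
    (P : Matrix ι ι R[X]) (hdiag : ∀ j, P j j ≠ 0)
    (hdeg : ∀ k j, k ≠ j → (P k j).degree < (P j j).degree)
    (hblock : ∀ a k, k ∉ Set.range e → P (e a) k = 0)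
    {q : ι → R[X]} (hq : q ∈ Submodule.span R[X] (Set.range fun c => P c))
    (hq0 : ∀ k ∉ Set.range e, q k = 0) :
    q ∘ e ∈ Submodule.span R[X] (Set.range fun a => P.submatrix e e a) := by
  rw [Submodule.mem_span_range_iff_exists_fun] at hq ⊢
  obtain ⟨v, rfl⟩ := hq
  rw [← vecMul_eq_sum] at hq0
  have hv0 := eq_zero_off_range_of_vecMul_eq_zero_off_range e P hdiag hdeg hblock hq0
  refine ⟨v ∘ e, ?_⟩
  rw [← vecMul_eq_sum, ← vecMul_eq_sum]
  funext b
  exact Fintype.sum_of_injective e he _ _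
    (fun c hc => by rw [hv0 c hc, zero_mul]) (fun _ => rfl)

end Matrix

theorem IsPopov.submatrix {K : Type*} [Field K] {m n : ℕ} {s : Fin n → ℤ}
    {P : Matrix (Fin n) (Fin n) K[X]} (hP : IsPopov s P) {e : Fin m → Fin n}
    (he : StrictMono e) : IsPopov (s ∘ e) (P.submatrix e e) := by
  obtain ⟨hmon, hdeg, hle, hlt⟩ := hP
  exact ⟨fun a => hmon _, fun a b hab => hdeg _ _ (he.injective.ne hab),
    fun a b => hle _ _, fun a b hab => hlt _ _ (he hab)⟩

theorem leading_block_is_solution_basis_general {K : Type*} [Field K] {n : ℕ}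
    (M : K[X]) (F : Fin n → K[X])
    (s : Fin n → ℤ)
    (P : Matrix (Fin n) (Fin n) K[X])
    (hPopov : IsPopov s P)
    (hsol : ∀ a, M ∣ ∑ b, P a b * F b)
    (hspan : ∀ p : Fin n → K[X], (M ∣ ∑ b, p b * F b) →
      p ∈ Submodule.span K[X] (Set.range fun a => P a))
    (i : ℕ) (hi : i < n)
    (hblock : ∀ j k : Fin n, j.val < i → i ≤ k.val → P j k = 0) :
    IsPopov (fun a : Fin i => s (Fin.castLE hi.le a))
        (fun a b : Fin i => P (Fin.castLE hi.le a) (Fin.castLE hi.le b)) ∧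
    (∀ a : Fin i, M ∣ ∑ b : Fin i, P (Fin.castLE hi.le a) (Fin.castLE hi.le b) *
        F (Fin.castLE hi.le b)) ∧
    (∀ p : Fin i → K[X], (M ∣ ∑ b : Fin i, p b * F (Fin.castLE hi.le b)) →
      p ∈ Submodule.span K[X]
        (Set.range fun a b : Fin i => P (Fin.castLE hi.le a) (Fin.castLE hi.le b))) := by
  set e := Fin.castLE hi.le
  have he : StrictMono e := Fin.strictMono_castLE hi.le
  have hoff : ∀ k ∉ Set.range e, i ≤ k.val := by simp [e, Fin.range_castLE]
  have hblock' : ∀ a k, k ∉ Set.range e → P (e a) k = 0 :=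
    fun a k hk => hblock _ _ a.isLt (hoff k hk)
  obtain ⟨hmon, hdeg, -⟩ := id hPopov
  refine ⟨hPopov.submatrix he, fun a => ?_, fun p hp => ?_⟩
  · convert hsol (e a) using 1
    exact Fintype.sum_of_injective e he.injective _ _
      (fun k hk => by rw [hblock' a k hk, zero_mul]) (fun _ => rfl)
  · set q := extend e p 0
    have hq0 : ∀ k ∉ Set.range e, q k = 0 := fun k hk => extend_apply' _ _ _ (by simpa using hk)
    have hqe : ∀ b, q (e b) = p b := he.injective.extend_apply p 0
    have hqsol : M ∣ ∑ b, q b * F b := by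
      convert hp using 1
      exact (Fintype.sum_of_injective e he.injective _ _
        (fun k hk => by rw [hq0 k hk, zero_mul]) (fun b => by rw [hqe])).symm
    have hspan' := Matrix.comp_mem_span_submatrix_of_mem_span he.injective P
      (fun j => (hmon j).ne_zero) hdeg hblock' (hspan q hqsol) hq0
    rwa [show q ∘ e = p from funext hqe] at hspan'

/-- if P is the s-Popov solution basis for (m, F) with s
non-decreasing and the top-right i×(n−i) block of P is zero, then the leading
principal i×i block P1 of P is the (s_1,...,s_i)-Popov solution basis for
(m, F1), where F1 consists of the first i entries of F: P1 is in
(s_1,...,s_i)-Popov form, its rows are solutions, and every solution of the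
truncated system lies in its row space. -/
theorem leading_block_is_solution_basis {K : Type*} [Field K] {n : ℕ}
    (M : K[X]) (hM : M ≠ 0) (F : Fin n → K[X])
    (hF : ∀ a, (F a).degree < M.degree)
    (s : Fin n → ℤ) (hs : Monotone s)
    (P : Matrix (Fin n) (Fin n) K[X])
    (hPopov : IsPopov s P)
    (hsol : ∀ a, M ∣ ∑ b, P a b * F b)
    (hspan : ∀ p : Fin n → K[X], (M ∣ ∑ b, p b * F b) →
      p ∈ Submodule.span K[X] (Set.range fun a => P a))
    (i : ℕ) (hi : i < n)
    (hblock : ∀ j k : Fin n, j.val < i → i ≤ k.val → P j k = 0) :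
    IsPopov (fun a : Fin i => s (Fin.castLE hi.le a))
        (fun a b : Fin i => P (Fin.castLE hi.le a) (Fin.castLE hi.le b)) ∧
    (∀ a : Fin i, M ∣ ∑ b : Fin i, P (Fin.castLE hi.le a) (Fin.castLE hi.le b) *
        F (Fin.castLE hi.le b)) ∧
    (∀ p : Fin i → K[X], (M ∣ ∑ b : Fin i, p b * F (Fin.castLE hi.le b)) →
      p ∈ Submodule.span K[X]
        (Set.range fun a b : Fin i => P (Fin.castLE hi.le a) (Fin.castLE hi.le b))) :=
  leading_block_is_solution_basis_general M F s P hPopov hsol hspan i hi hblock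
end
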